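/- arXiv:1906.02028 — 2 statements merged into one kernel-verified Lean document; each statement's English description precedes it below -/
import Mathlib

section
/- Let n be a natural number, let X be a set of binary strings of length n, and let D = {u ∈ {0,1}^n : u ≤ x for some x ∈ X} be the downward closure of X. Suppose v1, v2, v3, v4 ∈ D form a path in the hypercube Q_n, i.e. v1 is adjacent to v2, v2 is adjacent to v3, v3 is adjacent to v4, and v1, v2, v3, v4 are pairwise distinct. Then either there exists u ∈ D with u ≠ v2 such that u is adjacent to v1 and to v3, or there exists u ∈ D with u ≠ v3 such that u is adjacent to v2 and to v4. -/
/-!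
Write `x^i` for `x` with bit `i` flipped, so that the path is `v₂^i, v₂, v₂^j, v₂^{jk}` with
`i ≠ j ≠ k`, and `D` is a lower set. If `v₂ j = 1`, then `v₂^{ij}` lies below `v₁ = v₂^i`, hence
in `D`, and it is a common neighbour of `v₁` and `v₃` other than `v₂`. If `v₂ j = 0`, then `v₂^k`
lies below `v₂` (when `v₂ k = 1`) or below `v₄ = (v₂^k)^j` (when `v₂ k = 0`), and it is a common
neighbour of `v₂` and `v₄` other than `v₃`.
-/

def hypercube (n : ℕ) : SimpleGraph (Fin n → Bool) where
  Adj u v := hammingDist u v = 1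
  symm := by
    constructor
    intro u v h
    rwa [hammingDist_comm]
  loopless := by
    constructor
    intro u h
    simp [hammingDist_self] at h

section FlipBit

variable {ι : Type*} [DecidableEq ι]

def flipBit (u : ι → Bool) (i : ι) : ι → Bool :=
  Function.update u i (!u i)

variable {u : ι → Bool} {i j : ι}

@[simp]
lemma flipBit_apply_self : flipBit u i i = !u i :=
  Function.update_self _ _ _

lemma flipBit_apply_of_ne (h : j ≠ i) : flipBit u i j = u j :=
  Function.update_of_ne h _ _

@[simp]
lemma flipBit_flipBit_self : flipBit (flipBit u i) i = u := by
  simp [flipBit]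

lemma flipBit_comm (h : i ≠ j) : flipBit (flipBit u i) j = flipBit (flipBit u j) i := by
  simp only [flipBit, Function.update_of_ne h, Function.update_of_ne h.symm]
  exact Function.update_comm h _ _ _

lemma flipBit_ne_flipBit (h : i ≠ j) : flipBit u i ≠ flipBit u j := fun he => by
  simpa [flipBit_apply_of_ne h] using congrFun he i

lemma flipBit_flipBit_ne_self (h : i ≠ j) : flipBit (flipBit u i) j ≠ u := fun he => by
  simpa [flipBit_apply_of_ne h] using congrFun he i

lemma flipBit_le_self (h : u i = true) : flipBit u i ≤ u := by
  simp [flipBit, h]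

lemma le_flipBit_self (h : u i = false) : u ≤ flipBit u i := by
  simp [flipBit, h]

lemma hammingDist_eq_one_iff_exists_flipBit [Fintype ι] {u v : ι → Bool} :
    hammingDist u v = 1 ↔ ∃ i, v = flipBit u i := by
  rw [hammingDist, Finset.card_eq_one]
  constructor
  · rintro ⟨i, hi⟩
    refine ⟨i, funext fun j => ?_⟩
    have hj : u j ≠ v j ↔ j = i := by simpa using Finset.ext_iff.1 hi j
    by_cases hji : j = i
    · subst hji
      simpa [Bool.eq_not, eq_comm] using hj
    · rw [flipBit_apply_of_ne hji]
      exact (not_not.1 (hj.not.2 hji)).symm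
  · rintro ⟨i, rfl⟩
    refine ⟨i, Finset.ext fun j => ?_⟩
    by_cases hji : j = i <;> simp [hji, flipBit_apply_of_ne]

end FlipBit

section IsLowerSet

variable {ι : Type*} [DecidableEq ι] {D : Set (ι → Bool)} {u : ι → Bool} {i : ι}

lemma IsLowerSet.flipBit_mem (hD : IsLowerSet D) (hu : u ∈ D) (h : u i = true) :
    flipBit u i ∈ D :=
  hD (flipBit_le_self h) hu

lemma IsLowerSet.mem_of_flipBit_mem (hD : IsLowerSet D) (hu : flipBit u i ∈ D)
    (h : u i = false) : u ∈ D :=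
  hD (le_flipBit_self h) hu

end IsLowerSet

lemma hypercube_adj_iff {n : ℕ} {u v : Fin n → Bool} :
    (hypercube n).Adj u v ↔ ∃ i, v = flipBit u i :=
  hammingDist_eq_one_iff_exists_flipBit

lemma hypercube_adj_flipBit {n : ℕ} (u : Fin n → Bool) (i : Fin n) :
    (hypercube n).Adj u (flipBit u i) :=
  hypercube_adj_iff.2 ⟨i, rfl⟩

theorem daisyCube_path_common_neighbour_general (n : ℕ) (X : Set (Fin n → Bool))
    (D : Set (Fin n → Bool)) (hD : D = {u : Fin n → Bool | ∃ x ∈ X, u ≤ x})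
    (v₁ v₂ v₃ v₄ : Fin n → Bool)
    (h₁ : v₁ ∈ D) (h₂ : v₂ ∈ D) (h₄ : v₄ ∈ D)
    (h₁₂ : (hypercube n).Adj v₁ v₂) (h₂₃ : (hypercube n).Adj v₂ v₃)
    (h₃₄ : (hypercube n).Adj v₃ v₄)
    (hne₁₃ : v₁ ≠ v₃) (hne₂₄ : v₂ ≠ v₄) :
    (∃ u ∈ D, u ≠ v₂ ∧ (hypercube n).Adj u v₁ ∧ (hypercube n).Adj u v₃) ∨
    (∃ u ∈ D, u ≠ v₃ ∧ (hypercube n).Adj u v₂ ∧ (hypercube n).Adj u v₄) := by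
  have hlow : IsLowerSet D := hD ▸ (lowerClosure X).lower
  obtain ⟨i, rfl⟩ := hypercube_adj_iff.1 h₁₂.symm
  obtain ⟨j, rfl⟩ := hypercube_adj_iff.1 h₂₃
  obtain ⟨k, rfl⟩ := hypercube_adj_iff.1 h₃₄
  have hij : i ≠ j := by rintro rfl; exact hne₁₃ rfl
  have hjk : j ≠ k := by rintro rfl; exact hne₂₄ flipBit_flipBit_self.symm
  cases hj : v₂ j
  · have hu : flipBit v₂ k ∈ D := by
      cases hk : v₂ k
      · exact hlow.mem_of_flipBit_mem (by rwa [← flipBit_comm hjk])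
          (by rwa [flipBit_apply_of_ne hjk])
      · exact hlow.flipBit_mem h₂ hk
    refine .inr ⟨_, hu, flipBit_ne_flipBit hjk.symm, (hypercube_adj_flipBit _ _).symm, ?_⟩
    rw [flipBit_comm hjk]
    exact hypercube_adj_flipBit _ _
  · have hu : flipBit (flipBit v₂ i) j ∈ D :=
      hlow.flipBit_mem h₁ (by rwa [flipBit_apply_of_ne hij.symm])
    refine .inl ⟨_, hu, flipBit_flipBit_ne_self hij, (hypercube_adj_flipBit _ _).symm, ?_⟩
    rw [flipBit_comm hij]
    exact (hypercube_adj_flipBit _ _).symm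

/-- In a daisy cube, for every path `v₁, v₂, v₃, v₄` on four vertices, either
`v₁` and `v₃` have a common neighbour (inside the daisy cube) different from
`v₂`, or `v₂` and `v₄` have a common neighbour different from `v₃`. -/
theorem daisyCube_path_common_neighbour (n : ℕ) (X : Set (Fin n → Bool))
    (D : Set (Fin n → Bool)) (hD : D = {u : Fin n → Bool | ∃ x ∈ X, u ≤ x})
    (v₁ v₂ v₃ v₄ : Fin n → Bool)
    (h₁ : v₁ ∈ D) (h₂ : v₂ ∈ D) (h₃ : v₃ ∈ D) (h₄ : v₄ ∈ D)
    (h₁₂ : (hypercube n).Adj v₁ v₂) (h₂₃ : (hypercube n).Adj v₂ v₃)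
    (h₃₄ : (hypercube n).Adj v₃ v₄)
    (hne₁₂ : v₁ ≠ v₂) (hne₁₃ : v₁ ≠ v₃) (hne₁₄ : v₁ ≠ v₄)
    (hne₂₃ : v₂ ≠ v₃) (hne₂₄ : v₂ ≠ v₄) (hne₃₄ : v₃ ≠ v₄) :
    (∃ u ∈ D, u ≠ v₂ ∧ (hypercube n).Adj u v₁ ∧ (hypercube n).Adj u v₃) ∨
    (∃ u ∈ D, u ≠ v₃ ∧ (hypercube n).Adj u v₂ ∧ (hypercube n).Adj u v₄) :=
  daisyCube_path_common_neighbour_general n X D hD v₁ v₂ v₃ v₄ h₁ h₂ h₄ h₁₂ h₂₃ h₃₄ hne₁₃ hne₂₄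
end

section
/- Let n be a natural number, let X be a set of binary strings of length n, and let D = {u ∈ {0,1}^n : u ≤ x for some x ∈ X} be the downward closure of X. Then the daisy cube Q_n(X), i.e. the subgraph of Q_n induced by D, is an isometric subgraph of Q_n: for all u, v ∈ D there is a walk from u to v inside D whose length equals the Hamming distance between u and v (so the distance between u and v in the induced subgraph equals their distance in Q_n). -/
open Function

section Hamming

variable {ι : Type*} {β : ι → Type*} [Fintype ι] [DecidableEq ι] [∀ i, DecidableEq (β i)]

theorem hammingDist_update_of_ne {x : ∀ i, β i} {i : ι} {a : β i} (h : x i ≠ a) :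
    hammingDist x (update x i a) = 1 := by
  rw [hammingDist, Finset.card_eq_one]
  refine ⟨i, Finset.ext fun j => ?_⟩
  by_cases hj : j = i
  · subst hj; simpa using h
  · simp [hj]

theorem hammingDist_update_add_one {x y : ∀ i, β i} {i : ι} (h : x i ≠ y i) :
    hammingDist (update x i (y i)) y + 1 = hammingDist x y := by
  have hfilter : ({j | update x i (y i) j ≠ y j} : Finset ι) =
      ({j | x j ≠ y j} : Finset ι).erase i := by
    ext j
    by_cases hj : j = i <;> simp [hj]
  rw [hammingDist, hammingDist, hfilter, Finset.card_erase_add_one (by simpa using h)]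

end Hamming

theorem IsLowerSet.exists_update_mem {ι : Type*} {β : ι → Type*} [DecidableEq ι]
    [∀ i, LinearOrder (β i)] {D : Set (∀ i, β i)} (hD : IsLowerSet D) {u v : ∀ i, β i}
    (huv : u ≠ v) (hu : u ∈ D) (hv : v ∈ D) :
    ∃ i, u i ≠ v i ∧ update u i (v i) ∈ D := by
  by_cases hdown : ∃ i, v i < u i
  · obtain ⟨i, hi⟩ := hdown
    exact ⟨i, hi.ne', hD (update_le_self_iff.2 hi.le) hu⟩
  · have hle : u ≤ v := fun i => not_lt.1 fun hi => hdown ⟨i, hi⟩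
    obtain ⟨i, hi⟩ := ne_iff.1 huv
    exact ⟨i, hi, hD (update_le_iff.2 ⟨le_rfl, fun j _ => hle j⟩) hv⟩

theorem SimpleGraph.dist_eq_of_length_le {V : Type*} {G : SimpleGraph V} {u v : V} {d : ℕ}
    (p : G.Walk u v) (hp : p.length = d) (h : ∀ q : G.Walk u v, d ≤ q.length) :
    G.dist u v = d := by
  obtain ⟨q, hq⟩ := p.reachable.exists_walk_length_eq_dist
  exact le_antisymm (hp ▸ G.dist_le p) (hq ▸ h q)

namespace hypercube

variable {n : ℕ}

theorem adj_iff {u v : Fin n → Bool} : (hypercube n).Adj u v ↔ hammingDist u v = 1 := .rfl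

theorem hammingDist_le_length {u v : Fin n → Bool} (p : (hypercube n).Walk u v) :
    hammingDist u v ≤ p.length := by
  induction p with
  | nil => simp
  | @cons a b _ hab _ ih =>
    calc hammingDist a _ ≤ hammingDist a b + hammingDist b _ := hammingDist_triangle _ _ _
      _ ≤ _ := by rw [SimpleGraph.Walk.length_cons, adj_iff.1 hab]; omega

theorem hammingDist_le_length_induce {D : Set (Fin n → Bool)} {u v : D}
    (p : ((hypercube n).induce D).Walk u v) : hammingDist u.1 v.1 ≤ p.length :=
  (hammingDist_le_length (p.map (SimpleGraph.Embedding.induce D).toHom)).trans_eq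
    (p.length_map _)

theorem exists_walk_induce_length_eq_hammingDist {D : Set (Fin n → Bool)} (hD : IsLowerSet D)
    {u v : Fin n → Bool} (hu : u ∈ D) (hv : v ∈ D) :
    ∃ p : ((hypercube n).induce D).Walk ⟨u, hu⟩ ⟨v, hv⟩, p.length = hammingDist u v := by
  induction h : hammingDist u v generalizing u with
  | zero =>
    obtain rfl := hammingDist_eq_zero.1 h
    exact ⟨.nil, rfl⟩
  | succ k ih =>
    obtain ⟨i, hi, hmem⟩ := hD.exists_update_mem (hammingDist_ne_zero.1 (by omega)) hu hv
    obtain ⟨p, hp⟩ := ih hmem (by have := hammingDist_update_add_one hi; omega)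
    have hadj : ((hypercube n).induce D).Adj ⟨u, hu⟩ ⟨_, hmem⟩ :=
      adj_iff.2 (hammingDist_update_of_ne hi)
    exact ⟨.cons hadj p, by simp [hp]⟩

end hypercube

/-- The daisy cube `Q_n(X)`, the subgraph of `Q_n` induced by the downward
closure `D` of `X`, is an isometric subgraph of `Q_n`: any two of its vertices
are joined by a walk inside `D` whose length is their Hamming distance, and
hence the induced-subgraph distance coincides with the hypercube distance. -/
theorem daisyCube_isometric (n : ℕ) (X : Set (Fin n → Bool))
    (D : Set (Fin n → Bool)) (hD : D = {u : Fin n → Bool | ∃ x ∈ X, u ≤ x})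
    (u v : Fin n → Bool) (hu : u ∈ D) (hv : v ∈ D) :
    (∃ w : (hypercube n).Walk u v,
        (∀ a ∈ w.support, a ∈ D) ∧ w.length = hammingDist u v) ∧
    ((hypercube n).induce D).dist ⟨u, hu⟩ ⟨v, hv⟩ = (hypercube n).dist u v := by
  have hlower : IsLowerSet D := hD ▸ (lowerClosure X).lower
  obtain ⟨p, hp⟩ := hypercube.exists_walk_induce_length_eq_hammingDist hlower hu hv
  let w : (hypercube n).Walk u v := p.map (SimpleGraph.Embedding.induce D).toHom
  have hw : w.length = hammingDist u v := (p.length_map _).trans hp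
  refine ⟨⟨w, fun a ha => ?_, hw⟩, ?_⟩
  · obtain ⟨b, -, rfl⟩ := List.mem_map.1 ((p.support_map _) ▸ ha)
    exact b.2
  · rw [SimpleGraph.dist_eq_of_length_le p hp hypercube.hammingDist_le_length_induce,
      SimpleGraph.dist_eq_of_length_le w hw hypercube.hammingDist_le_length]
end
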